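/- If (M, ω) is a pre-symplectic manifold and A a Lie algebroid over M with connection ∇ and momentum section μ satisfying ᴬ∇ω = 0, (∇μ)(e) = −ι_{ρ(e)}ω, and (ᴬd μ)(e₁,e₂) = ω(ρ(e₁),ρ(e₂)), then: (i) ⟨(ρ+∇μ)(e₁),(ρ+∇μ)(e₂)⟩ = 0; (ii) ½⟨(ρ+∇μ)(e₁),(ρ+∇μ)(e₂)⟩₋ = ω(ρ(e₁),ρ(e₂)); i.e., ρ+∇μ takes values in the Dirac structure L_ω and μ is bracket-compatible in the Dirac sense. -/

import Mathlib

/-!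
Abstract Cartan calculus on a smooth manifold `M`:
`R` plays the role of the functions `C^∞(M)`, `V` of vector fields `𝔛(M)`
(with the Lie bracket of vector fields), and `Ωk` of differential `k`-forms.
`act` is the derivation action of vector fields on functions, `dk` the de Rham
differentials, `ev X α = α(X) = ι_X α`, `ik` the interior products and `Lk` the
Lie derivatives, subject to the standard identities of Cartan calculus.
-/
structure CartanCalc (R V Ω1 Ω2 Ω3 Ω4 : Type*) [CommRing R] [LieRing V]
    [Module R V] [AddCommGroup Ω1] [Module R Ω1] [AddCommGroup Ω2] [Module R Ω2]
    [AddCommGroup Ω3] [Module R Ω3] [AddCommGroup Ω4] [Module R Ω4] where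
  act : V → R → R
  d0 : R →+ Ω1
  d1 : Ω1 →+ Ω2
  d2 : Ω2 →+ Ω3
  d3 : Ω3 →+ Ω4
  ev : V → Ω1 →+ R
  i2 : V → Ω2 →+ Ω1
  i3 : V → Ω3 →+ Ω2
  i4 : V → Ω4 →+ Ω3
  L1 : V → Ω1 →+ Ω1
  L2 : V → Ω2 →+ Ω2
  L3 : V → Ω3 →+ Ω3
  act_bracket : ∀ (X Y : V) (f : R), act ⁅X, Y⁆ f = act X (act Y f) - act Y (act X f)
  act_mul : ∀ (X : V) (f g : R), act X (f * g) = f * act X g + g * act X f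
  ev_d0 : ∀ (X : V) (f : R), ev X (d0 f) = act X f
  ev_add_left : ∀ (X Y : V) (α : Ω1), ev (X + Y) α = ev X α + ev Y α
  ev_smul_left : ∀ (f : R) (X : V) (α : Ω1), ev (f • X) α = f * ev X α
  ev_smul_right : ∀ (X : V) (f : R) (α : Ω1), ev X (f • α) = f * ev X α
  i2_add_left : ∀ (X Y : V) (η : Ω2), i2 (X + Y) η = i2 X η + i2 Y η
  i2_smul_left : ∀ (f : R) (X : V) (η : Ω2), i2 (f • X) η = f • i2 X η
  i2_alt : ∀ (X : V) (η : Ω2), ev X (i2 X η) = 0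
  i3_alt : ∀ (X : V) (ξ : Ω3), i2 X (i3 X ξ) = 0
  cartan1 : ∀ (X : V) (α : Ω1), L1 X α = d0 (ev X α) + i2 X (d1 α)
  cartan2 : ∀ (X : V) (η : Ω2), L2 X η = d1 (i2 X η) + i3 X (d2 η)
  cartan3 : ∀ (X : V) (ξ : Ω3), L3 X ξ = d2 (i3 X ξ) + i4 X (d3 ξ)
  d1_d0 : ∀ f : R, d1 (d0 f) = 0
  d2_d1 : ∀ α : Ω1, d2 (d1 α) = 0
  d3_d2 : ∀ η : Ω2, d3 (d2 η) = 0
  L1_d0 : ∀ (X : V) (f : R), L1 X (d0 f) = d0 (act X f)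
  L2_d1 : ∀ (X : V) (α : Ω1), L2 X (d1 α) = d1 (L1 X α)
  i2_bracket : ∀ (X Y : V) (η : Ω2), i2 ⁅X, Y⁆ η = L1 X (i2 Y η) - i2 Y (L2 X η)
  i3_bracket : ∀ (X Y : V) (ξ : Ω3), i3 ⁅X, Y⁆ ξ = L2 X (i3 Y ξ) - i3 Y (L3 X ξ)
  ev_bracket : ∀ (X Y : V) (α : Ω1), ev ⁅X, Y⁆ α = act X (ev Y α) - ev Y (L1 X α)
  bracket_smul : ∀ (X : V) (f : R) (Y : V), ⁅X, f • Y⁆ = f • ⁅X, Y⁆ + act X f • Y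
  L1_smul : ∀ (X : V) (f : R) (α : Ω1), L1 X (f • α) = f • L1 X α + act X f • α

namespace CartanCalc

variable {R V Ω1 Ω2 Ω3 Ω4 : Type*} [CommRing R] [LieRing V]
    [Module R V] [AddCommGroup Ω1] [Module R Ω1] [AddCommGroup Ω2] [Module R Ω2]
    [AddCommGroup Ω3] [Module R Ω3] [AddCommGroup Ω4] [Module R Ω4]

/-- The `H`-twisted Dorfman bracket on sections `(X, α)` of `TM ⊕ T*M`:
`⟦X+α, Y+β⟧ = [X,Y] + L_X β − ι_Y dα + ι_X ι_Y H`. -/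
def dorfmanH (C : CartanCalc R V Ω1 Ω2 Ω3 Ω4) (H : Ω3) (e₁ e₂ : V × Ω1) : V × Ω1 :=
  (⁅e₁.1, e₂.1⁆, C.L1 e₁.1 e₂.2 - C.i2 e₂.1 (C.d1 e₁.2) + C.i2 e₁.1 (C.i3 e₂.1 H))

/-- The untwisted Dorfman bracket `⟦X+α, Y+β⟧ = [X,Y] + L_X β − ι_Y dα`. -/
def dorfman0 (C : CartanCalc R V Ω1 Ω2 Ω3 Ω4) (e₁ e₂ : V × Ω1) : V × Ω1 :=
  (⁅e₁.1, e₂.1⁆, C.L1 e₁.1 e₂.2 - C.i2 e₂.1 (C.d1 e₁.2))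

/-- The symmetric pairing `⟨X+α, Y+β⟩ = β(X) + α(Y)` on `TM ⊕ T*M`. -/
def pair (C : CartanCalc R V Ω1 Ω2 Ω3 Ω4) (e₁ e₂ : V × Ω1) : R :=
  C.ev e₁.1 e₂.2 + C.ev e₂.1 e₁.2

/-- The antisymmetric pairing `⟨X+α, Y+β⟩₋ = α(Y) − β(X)` on `TM ⊕ T*M`. -/
def pairm (C : CartanCalc R V Ω1 Ω2 Ω3 Ω4) (e₁ e₂ : V × Ω1) : R :=
  C.ev e₂.1 e₁.2 - C.ev e₁.1 e₂.2

/-- The Koszul bracket `[α,β]_π = L_{π♯α} β − L_{π♯β} α − d(π(α,β))`,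
where `ps = π♯` and `π(α,β) = β(π♯α) = ev (ps α) β`. -/
def koszul (C : CartanCalc R V Ω1 Ω2 Ω3 Ω4) (ps : Ω1 → V) (α β : Ω1) : Ω1 :=
  C.L1 (ps α) β - C.L1 (ps β) α - C.d0 (C.ev (ps α) β)

end CartanCalc

open CartanCalc

variable {R V Ω1 Ω2 Ω3 Ω4 : Type*} [CommRing R] [LieRing V]
    [Module R V] [AddCommGroup Ω1] [Module R Ω1] [AddCommGroup Ω2] [Module R Ω2]
    [AddCommGroup Ω3] [Module R Ω3] [AddCommGroup Ω4] [Module R Ω4]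

namespace CartanCalc

variable (C : CartanCalc R V Ω1 Ω2 Ω3 Ω4)

/-- Polarization of `i2_alt`. -/
theorem ev_i2_swap (X Y : V) (η : Ω2) : C.ev X (C.i2 Y η) = -C.ev Y (C.i2 X η) := by
  have h := C.i2_alt (X + Y) η
  rw [C.i2_add_left, map_add, C.ev_add_left, C.ev_add_left, C.i2_alt, C.i2_alt] at h
  linear_combination h

theorem pair_graph_eq_zero (η : Ω2) (X Y : V) :
    C.pair (X, -C.i2 X η) (Y, -C.i2 Y η) = 0 := by
  simp only [pair, map_neg, C.ev_i2_swap Y X]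
  ring

theorem pairm_graph (η : Ω2) (X Y : V) :
    C.pairm (X, -C.i2 X η) (Y, -C.i2 Y η) = 2 * C.ev X (C.i2 Y η) := by
  simp only [pairm, map_neg, C.ev_i2_swap Y X]
  ring

theorem invOf_two_mul_pairm_graph [Invertible (2 : R)] (η : Ω2) (X Y : V) :
    ⅟(2 : R) * C.pairm (X, -C.i2 X η) (Y, -C.i2 Y η) = C.ev X (C.i2 Y η) := by
  rw [pairm_graph, invOf_mul_cancel_left]

end CartanCalc

theorem presymplectic_momentum_to_dirac_general (C : CartanCalc R V Ω1 Ω2 Ω3 Ω4)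
    [Invertible (2 : R)]
    {A : Type*} [LieRing A] (ρA : A → V)
    (μ : A → R) (dμ : A → Ω1) (ω : Ω2)
    (hmom : ∀ e : A, dμ e = - C.i2 (ρA e) ω)
    (hbr : ∀ e₁ e₂ : A,
      C.act (ρA e₁) (μ e₂) - C.act (ρA e₂) (μ e₁) - μ ⁅e₁, e₂⁆
        = C.ev (ρA e₁) (C.i2 (ρA e₂) ω)) :
    (∀ e₁ e₂ : A, C.pair (ρA e₁, dμ e₁) (ρA e₂, dμ e₂) = 0)
    ∧ (∀ e₁ e₂ : A, ⅟(2 : R) * C.pairm (ρA e₁, dμ e₁) (ρA e₂, dμ e₂)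
        = C.ev (ρA e₁) (C.i2 (ρA e₂) ω))
    ∧ (∀ e₁ e₂ : A,
        C.act (ρA e₁) (μ e₂) - C.act (ρA e₂) (μ e₁) - μ ⁅e₁, e₂⁆
          = ⅟(2 : R) * C.pairm (ρA e₁, dμ e₁) (ρA e₂, dμ e₂)) := by
  obtain rfl : dμ = fun e => -C.i2 (ρA e) ω := funext hmom
  exact ⟨fun e₁ e₂ => C.pair_graph_eq_zero ω (ρA e₁) (ρA e₂),
    fun e₁ e₂ => C.invOf_two_mul_pairm_graph ω (ρA e₁) (ρA e₂),
    fun e₁ e₂ => (hbr e₁ e₂).trans (C.invOf_two_mul_pairm_graph ω (ρA e₁) (ρA e₂)).symm⟩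

/-- If `(M,ω)` is pre-symplectic and `A` a Lie algebroid with
connection and momentum section `μ` satisfying `ᴬ∇ω = 0`,
`(∇μ)(e) = −ι_{ρ(e)}ω` and `(ᴬd μ)(e₁,e₂) = ω(ρe₁, ρe₂)`, then:
(i) `⟨(ρ+∇μ)e₁, (ρ+∇μ)e₂⟩ = 0`;
(ii) `½⟨(ρ+∇μ)e₁, (ρ+∇μ)e₂⟩₋ = ω(ρe₁, ρe₂)`;
i.e. `ρ+∇μ` takes values in `L_ω` and `μ` is bracket-compatible in the Dirac
sense (third conjunct).  Here `ω(X,Y)` is rendered as `ev X (ι_Y ω)`. -/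
theorem presymplectic_momentum_to_dirac (C : CartanCalc R V Ω1 Ω2 Ω3 Ω4)
    [Invertible (2 : R)]
    {A : Type*} [LieRing A] (ρA : A → V)
    (μ : A → R) (dμ : A → Ω1) (ω : Ω2)
    (hclosed : C.d2 ω = 0)
    (hAω : ∀ e : A, C.L2 (ρA e) ω = 0)
    (hmom : ∀ e : A, dμ e = - C.i2 (ρA e) ω)
    (hbr : ∀ e₁ e₂ : A,
      C.act (ρA e₁) (μ e₂) - C.act (ρA e₂) (μ e₁) - μ ⁅e₁, e₂⁆
        = C.ev (ρA e₁) (C.i2 (ρA e₂) ω)) :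
    (∀ e₁ e₂ : A, C.pair (ρA e₁, dμ e₁) (ρA e₂, dμ e₂) = 0)
    ∧ (∀ e₁ e₂ : A, ⅟(2 : R) * C.pairm (ρA e₁, dμ e₁) (ρA e₂, dμ e₂)
        = C.ev (ρA e₁) (C.i2 (ρA e₂) ω))
    ∧ (∀ e₁ e₂ : A,
        C.act (ρA e₁) (μ e₂) - C.act (ρA e₂) (μ e₁) - μ ⁅e₁, e₂⁆
          = ⅟(2 : R) * C.pairm (ρA e₁, dμ e₁) (ρA e₂, dμ e₂)) :=
  presymplectic_momentum_to_dirac_general C ρA μ dμ ω hmom hbr
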